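/- Let 1/2 < s < 3/2. There is a constant c > 0, depending only on s, such that for all m ∈ ℤ and all M ∈ ℕ: (a) Σ_{n∈ℤ} ⟨n⟩^{−(2s−1)}⟨m−n⟩^{−1} ≤ c·⟨m⟩^{−(s−1/2)}; and (b) Σ_{n∈ℤ, |n|≥M} ⟨n⟩^{−(2s−1)}⟨m−n⟩^{−1} ≤ c·⟨m⟩^{−(s−1/2)}·( 1_{{|m| ≥ 2M/3}} + ⟨M⟩^{−(s−1/2)} ). -/

import Mathlib

/-- The Japanese bracket `⟨n⟩ = (1+n²)^{1/2}` of an integer. -/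
noncomputable def jap (n : ℤ) : ℝ := Real.sqrt (1 + (n : ℝ) ^ 2)

lemma jap_one_le (n : ℤ) : 1 ≤ jap n := by
  have h := Real.sqrt_le_sqrt (show (1:ℝ) ≤ 1 + (n:ℝ)^2 by nlinarith [sq_nonneg ((n:ℝ))])
  simpa [jap] using h

lemma jap_pos (n : ℤ) : 0 < jap n := lt_of_lt_of_le one_pos (jap_one_le n)

lemma jap_neg (n : ℤ) : jap (-n) = jap n := by simp [jap]

lemma jap_le_jap {n k : ℤ} (h : (n:ℝ)^2 ≤ (k:ℝ)^2) : jap n ≤ jap k :=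
  Real.sqrt_le_sqrt (by linarith)

lemma abs_le_jap (n : ℤ) : |(n:ℝ)| ≤ jap n := by
  rw [jap, ← Real.sqrt_sq_eq_abs]
  exact Real.sqrt_le_sqrt (by nlinarith)

lemma jap_rpow_nonneg (n : ℤ) (x : ℝ) : 0 ≤ jap n ^ x :=
  Real.rpow_nonneg (jap_pos n).le x

lemma jap_rpow_le {n k : ℤ} (h : jap n ≤ jap k) {e : ℝ} (he : 0 ≤ e) :
    jap k ^ (-e) ≤ jap n ^ (-e) :=
  Real.rpow_le_rpow_of_nonpos (jap_pos n) h (neg_nonpos.2 he)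

lemma jap_rpow_add (n : ℤ) (x y : ℝ) : jap n ^ (x + y) = jap n ^ x * jap n ^ y :=
  Real.rpow_add (jap_pos n) x y

lemma max_trick (x y : ℤ) {α β : ℝ} (hα : 0 ≤ α) (hβ : 0 ≤ β) :
    jap x ^ (-α) * jap y ^ (-β) ≤ jap x ^ (-(α+β)) + jap y ^ (-(α+β)) := by
  rcases le_total (jap x) (jap y) with h | h
  · have h1 : jap y ^ (-β) ≤ jap x ^ (-β) := jap_rpow_le h hβ
    have h2 : jap x ^ (-α) * jap y ^ (-β) ≤ jap x ^ (-(α+β)) := by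
      rw [neg_add, jap_rpow_add]
      exact mul_le_mul_of_nonneg_left h1 (jap_rpow_nonneg x _)
    exact h2.trans (le_add_of_nonneg_right (jap_rpow_nonneg y _))
  · have h1 : jap x ^ (-α) ≤ jap y ^ (-α) := jap_rpow_le h hα
    have h2 : jap x ^ (-α) * jap y ^ (-β) ≤ jap y ^ (-(α+β)) := by
      rw [neg_add, jap_rpow_add]
      exact mul_le_mul_of_nonneg_right h1 (jap_rpow_nonneg y _)
    exact h2.trans (le_add_of_nonneg_left (jap_rpow_nonneg x _))

lemma telescope_ineq {x q : ℝ} (hx : 1 ≤ x) (hq : 0 < q) :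
    q * (x+1) ^ (-(q+1)) ≤ x ^ (-q) - (x+1) ^ (-q) := by
  have hx0 : (0:ℝ) < x := lt_of_lt_of_le one_pos hx
  have hx1 : (0:ℝ) < x + 1 := by linarith
  set u : ℝ := (x+1)/x with hu_def
  have hu0 : 0 < u := div_pos hx1 hx0
  have hlog : 1 - u⁻¹ ≤ Real.log u := by
    have h := Real.log_le_sub_one_of_pos (inv_pos.2 hu0)
    rw [Real.log_inv] at h
    linarith
  have huinv : u⁻¹ = x / (x+1) := by
    rw [hu_def]; field_simp
  have hlog' : 1/(x+1) ≤ Real.log u := by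
    rw [huinv] at hlog
    have : 1 - x/(x+1) = 1/(x+1) := by field_simp; ring
    linarith [this ▸ hlog]
  have hexp : 1 + Real.log u * q ≤ u ^ q := by
    rw [Real.rpow_def_of_pos hu0]
    linarith [Real.add_one_le_exp (Real.log u * q)]
  have huq : 1 + q/(x+1) ≤ u ^ q := by
    have : q * (1/(x+1)) ≤ Real.log u * q := by
      rw [mul_comm]
      exact mul_le_mul_of_nonneg_right hlog' hq.le
    calc 1 + q/(x+1) = 1 + q * (1/(x+1)) := by ring
    _ ≤ 1 + Real.log u * q := by linarith
    _ ≤ u ^ q := hexp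
  -- x^(-q) = (x+1)^(-q) * u^q
  have hxq : x ^ (-q) = (x+1) ^ (-q) * u ^ q := by
    rw [hu_def, Real.div_rpow hx1.le hx0.le, Real.rpow_neg hx1.le]
    field_simp
    rw [← Real.rpow_add hx0]; simp
  have hsplit : (x+1) ^ (-(q+1)) = (x+1) ^ (-q) * (x+1)⁻¹ := by
    rw [show -(q+1) = -q + (-1) by ring, Real.rpow_add hx1, Real.rpow_neg_one]
  have hpos : (0:ℝ) < (x+1) ^ (-q) := Real.rpow_pos_of_pos hx1 _
  rw [hxq, hsplit]
  have : q * ((x+1)⁻¹) ≤ u ^ q - 1 := by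
    have h1 : q / (x+1) = q * (x+1)⁻¹ := by ring
    linarith [h1 ▸ huq]
  nlinarith [hpos]

lemma step2 {p q x : ℝ} (hq : 0 < q) (hpq : p = q + 1) (hx : 1 ≤ x) :
    x ^ (-p) ≤ (2 ^ p / q) * (x ^ (-q) - (x+1) ^ (-q)) := by
  have hx0 : (0:ℝ) < x := lt_of_lt_of_le one_pos hx
  have hx1 : (0:ℝ) < x + 1 := by linarith
  have h1 : q * (x+1) ^ (-p) ≤ x ^ (-q) - (x+1) ^ (-q) := by
    rw [hpq]; exact telescope_ineq hx hq
  have h2 : (2*x) ^ (-p) ≤ (x+1) ^ (-p) :=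
    Real.rpow_le_rpow_of_nonpos hx1 (by linarith) (by nlinarith [hpq, hq])
  have h3 : (2*x) ^ (-p) = 2 ^ (-p) * x ^ (-p) :=
    Real.mul_rpow (by norm_num) hx0.le
  have h2p : (0:ℝ) < 2 ^ p := Real.rpow_pos_of_pos two_pos p
  have h2p' : (2:ℝ) ^ (-p) * 2 ^ p = 1 := by
    rw [← Real.rpow_add two_pos]; simp
  have key : q * (2 ^ (-p) * x ^ (-p)) ≤ x ^ (-q) - (x+1) ^ (-q) := by
    calc q * (2 ^ (-p) * x ^ (-p)) = q * (2*x) ^ (-p) := by rw [h3]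
    _ ≤ x ^ (-q) - (x+1) ^ (-q) := by
        refine le_trans (mul_le_mul_of_nonneg_left h2 hq.le) h1
  rw [div_mul_eq_mul_div, le_div_iff₀ hq]
  have hkey2 := mul_le_mul_of_nonneg_left key h2p.le
  have e1 : 2^p*(q*(2^(-p) * x^(-p))) = (2^(-p)*(2:ℝ)^p) * (q * x^(-p)) := by ring
  rw [e1, h2p', one_mul] at hkey2
  linarith

lemma summable_nat_shift {p : ℝ} (hp : 1 < p) :
    Summable (fun n : ℕ => ((n:ℝ) + 1) ^ (-p)) := by
  have h : Summable (fun n : ℕ => (n:ℝ) ^ (-p)) :=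
    Real.summable_nat_rpow.2 (by linarith)
  have h2 := (summable_nat_add_iff (f := fun n : ℕ => (n:ℝ) ^ (-p)) 1).2 h
  refine h2.congr fun n => ?_
  push_cast
  ring_nf

lemma nat_tail_summable {p q : ℝ} (hq : 0 < q) (hpq : p = q + 1) (M : ℕ) (hM : 1 ≤ M) :
    Summable (fun j : ℕ => ((M + j : ℕ) : ℝ) ^ (-p)) := by
  refine Summable.of_nonneg_of_le (fun j => Real.rpow_nonneg (by positivity) _)
    (fun j => ?_) (summable_nat_shift (by linarith))
  have hb : ((j:ℝ) + 1) ≤ ((M + j : ℕ) : ℝ) := by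
    push_cast
    have : (1:ℝ) ≤ (M:ℝ) := by exact_mod_cast hM
    linarith
  exact Real.rpow_le_rpow_of_nonpos (by positivity) hb (by linarith)

lemma nat_tail_sum {p q : ℝ} (hq : 0 < q) (hpq : p = q + 1) (M : ℕ) (hM : 1 ≤ M) :
    ∑' j : ℕ, ((M + j : ℕ) : ℝ) ^ (-p) ≤ (2 ^ p / q) * (M:ℝ) ^ (-q) := by
  have hMR : (1:ℝ) ≤ (M:ℝ) := by exact_mod_cast hM
  refine Summable.tsum_le_of_sum_le (nat_tail_summable hq hpq M hM) (fun s => ?_)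
  obtain ⟨N, hN⟩ := s.exists_nat_subset_range
  set F : ℕ → ℝ := fun j => ((M + j : ℕ) : ℝ) ^ (-q) with hF
  have hterm : ∀ j : ℕ, ((M + j : ℕ) : ℝ) ^ (-p) ≤ (2 ^ p / q) * (F j - F (j+1)) := by
    intro j
    have hx : (1:ℝ) ≤ ((M + j : ℕ) : ℝ) := by push_cast; linarith [Nat.cast_nonneg (α := ℝ) j]
    have := step2 hq hpq hx
    have hcast : ((M + (j+1) : ℕ) : ℝ) = ((M + j : ℕ) : ℝ) + 1 := by push_cast; ring
    rw [hF]
    simp only [hcast]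
    exact this
  calc ∑ j ∈ s, ((M + j : ℕ) : ℝ) ^ (-p)
      ≤ ∑ j ∈ Finset.range N, ((M + j : ℕ) : ℝ) ^ (-p) :=
        Finset.sum_le_sum_of_subset_of_nonneg hN
          (fun j _ _ => Real.rpow_nonneg (by positivity) _)
    _ ≤ ∑ j ∈ Finset.range N, (2 ^ p / q) * (F j - F (j+1)) :=
        Finset.sum_le_sum (fun j _ => hterm j)
    _ = (2 ^ p / q) * (F 0 - F N) := by
        rw [← Finset.mul_sum, Finset.sum_range_sub' F N]
    _ ≤ (2 ^ p / q) * F 0 := by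
        have : (0:ℝ) ≤ F N := Real.rpow_nonneg (by positivity) _
        have h2 : (0:ℝ) ≤ 2 ^ p / q := by positivity
        nlinarith
    _ = (2 ^ p / q) * (M:ℝ) ^ (-q) := by simp [hF]

lemma rpow_M_le {q : ℝ} (hq : 0 < q) (M : ℕ) (hM : 1 ≤ M) :
    (M:ℝ) ^ (-q) ≤ 2 ^ (q/2) * jap (M:ℤ) ^ (-q) := by
  have hMR : (1:ℝ) ≤ (M:ℝ) := by exact_mod_cast hM
  have hjap : jap (M:ℤ) ≤ Real.sqrt 2 * (M:ℝ) := by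
    have h1 : jap (M:ℤ) ≤ Real.sqrt (2 * (M:ℝ)^2) := by
      rw [jap]
      push_cast
      exact Real.sqrt_le_sqrt (by nlinarith)
    rwa [Real.sqrt_mul (by norm_num), Real.sqrt_sq (by linarith)] at h1
  have h2 : (Real.sqrt 2 * (M:ℝ)) ^ (-q) ≤ jap (M:ℤ) ^ (-q) :=
    Real.rpow_le_rpow_of_nonpos (jap_pos _) hjap (by linarith)
  have h3 : (Real.sqrt 2 * (M:ℝ)) ^ (-q) = 2 ^ (-(q/2)) * (M:ℝ) ^ (-q) := by
    rw [Real.mul_rpow (Real.sqrt_nonneg 2) (by linarith), Real.sqrt_eq_rpow,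
      ← Real.rpow_mul (by norm_num)]
    ring_nf
  have h4 : (2:ℝ) ^ (-(q/2)) * 2 ^ (q/2) = 1 := by
    rw [← Real.rpow_add two_pos]; simp
  have h5 := mul_le_mul_of_nonneg_left (h3 ▸ h2) (Real.rpow_nonneg (by norm_num : (0:ℝ) ≤ 2) (q/2))
  have e1 : (2:ℝ)^(q/2) * (2^(-(q/2)) * (M:ℝ)^(-q)) = (2^(-(q/2)) * (2:ℝ)^(q/2)) * (M:ℝ)^(-q) := by
    ring
  rw [e1, h4, one_mul] at h5
  exact h5

set_option maxHeartbeats 1000000 in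
lemma int_tail_bound {p q : ℝ} (hq : 0 < q) (hpq : p = q + 1) (M : ℕ) (hM : 1 ≤ M) :
    Summable (fun n : ℤ => if (M:ℤ) ≤ |n| then jap n ^ (-p) else 0) ∧
    ∑' n : ℤ, (if (M:ℤ) ≤ |n| then jap n ^ (-p) else 0) ≤
      (2 * (2 ^ p / q) * 2 ^ (q/2)) * jap (M:ℤ) ^ (-q) := by
  set h : ℤ → ℝ := fun n => if (M:ℤ) ≤ n then jap n ^ (-p) else 0 with hh
  have hnn : ∀ k : ℤ, 0 ≤ h k := by
    intro k; rw [hh]; dsimp only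
    split <;> [exact jap_rpow_nonneg _ _; exact le_rfl]
  set i : ℕ → ℤ := fun j => (M:ℤ) + j with hi_def
  have hi : Function.Injective i := by
    intro a b hab
    simp only [hi_def, add_right_inj, Nat.cast_inj] at hab
    exact hab
  have hsupp : ∀ n ∉ Set.range i, h n = 0 := by
    intro n hn
    rw [hh]; dsimp only
    rw [if_neg]
    intro hMn
    exact hn ⟨(n - M).toNat, by simp [hi_def]; omega⟩
  have hcomp : ∀ j : ℕ, h (i j) = jap ((M:ℤ) + j) ^ (-p) := by
    intro j
    simp only [hh, hi_def]
    rw [if_pos (by omega)]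
  have hle_nat : ∀ j : ℕ, jap ((M:ℤ) + j) ^ (-p) ≤ ((M + j : ℕ) : ℝ) ^ (-p) := by
    intro j
    have hb : ((M + j : ℕ) : ℝ) ≤ jap ((M:ℤ) + j) := by
      have := abs_le_jap ((M:ℤ) + j)
      have h0 : ((M + j : ℕ) : ℝ) = (((M:ℤ) + j : ℤ) : ℝ) := by push_cast; ring
      rw [h0]
      exact le_trans (le_abs_self _) this
    have hpos : (0:ℝ) < ((M + j : ℕ) : ℝ) := by
      have : (1:ℝ) ≤ (M:ℝ) := by exact_mod_cast hM
      push_cast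
      linarith [Nat.cast_nonneg (α := ℝ) j]
    exact Real.rpow_le_rpow_of_nonpos hpos hb (by linarith)
  have hsum_comp : Summable (fun j : ℕ => h (i j)) := by
    refine Summable.of_nonneg_of_le (fun j => hnn _) (fun j => ?_)
      (nat_tail_summable hq hpq M hM)
    rw [hcomp j]; exact hle_nat j
  have hsum_h : Summable h := (hi.summable_iff hsupp).1 hsum_comp
  have hsupp2 : Function.support h ⊆ Set.range i := by
    intro n hn
    by_contra hc
    exact hn (hsupp n hc)
  have htsum_h : ∑' n : ℤ, h n ≤ (2 ^ p / q) * (M:ℝ) ^ (-q) := by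
    rw [← hi.tsum_eq hsupp2]
    calc ∑' j : ℕ, h (i j) ≤ ∑' j : ℕ, ((M + j : ℕ) : ℝ) ^ (-p) := by
          refine Summable.tsum_le_tsum (fun j => ?_) hsum_comp (nat_tail_summable hq hpq M hM)
          rw [hcomp j]; exact hle_nat j
      _ ≤ (2 ^ p / q) * (M:ℝ) ^ (-q) := nat_tail_sum hq hpq M hM
  have hsum_neg : Summable (fun n : ℤ => h (-n)) := ((Equiv.neg ℤ).summable_iff).2 hsum_h
  have htsum_neg : ∑' n : ℤ, h (-n) = ∑' n : ℤ, h n := (Equiv.neg ℤ).tsum_eq h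
  have hptwise : ∀ n : ℤ, (if (M:ℤ) ≤ |n| then jap n ^ (-p) else 0) ≤ h n + h (-n) := by
    intro n
    by_cases habs : (M:ℤ) ≤ |n|
    · rw [if_pos habs]
      rcases le_or_gt 0 n with hn0 | hn0
      · rw [abs_of_nonneg hn0] at habs
        have heq : h n = jap n ^ (-p) := by rw [hh]; exact if_pos habs
        linarith [hnn (-n), heq]
      · rw [abs_of_neg hn0] at habs
        have heq : h (-n) = jap n ^ (-p) := by
          rw [hh]; dsimp only; rw [if_pos habs, jap_neg]
        linarith [hnn n, heq]
    · rw [if_neg habs]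
      exact add_nonneg (hnn n) (hnn (-n))
  have hnn' : ∀ n : ℤ, 0 ≤ (if (M:ℤ) ≤ |n| then jap n ^ (-p) else 0) := by
    intro n; split <;> [exact jap_rpow_nonneg _ _; exact le_rfl]
  have hsumg : Summable (fun n : ℤ => if (M:ℤ) ≤ |n| then jap n ^ (-p) else 0) :=
    Summable.of_nonneg_of_le hnn' hptwise (hsum_h.add hsum_neg)
  refine ⟨hsumg, ?_⟩
  have step1 : ∑' n : ℤ, (if (M:ℤ) ≤ |n| then jap n ^ (-p) else 0) ≤
      2 * ((2 ^ p / q) * (M:ℝ) ^ (-q)) := by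
    calc ∑' n : ℤ, (if (M:ℤ) ≤ |n| then jap n ^ (-p) else 0)
        ≤ ∑' n : ℤ, (h n + h (-n)) := Summable.tsum_le_tsum hptwise hsumg (hsum_h.add hsum_neg)
      _ = (∑' n : ℤ, h n) + ∑' n : ℤ, h (-n) := Summable.tsum_add hsum_h hsum_neg
      _ = 2 * ∑' n : ℤ, h n := by rw [htsum_neg]; ring
      _ ≤ 2 * ((2 ^ p / q) * (M:ℝ) ^ (-q)) := by linarith [htsum_h]
  have hCpos : (0:ℝ) ≤ 2 * (2 ^ p / q) := by positivity
  calc ∑' n : ℤ, (if (M:ℤ) ≤ |n| then jap n ^ (-p) else 0)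
      ≤ 2 * ((2 ^ p / q) * (M:ℝ) ^ (-q)) := step1
    _ ≤ 2 * (2 ^ p / q) * (2 ^ (q/2) * jap (M:ℤ) ^ (-q)) := by
        have := mul_le_mul_of_nonneg_left (rpow_M_le hq M hM) hCpos
        linarith [this]
    _ = (2 * (2 ^ p / q) * 2 ^ (q/2)) * jap (M:ℤ) ^ (-q) := by ring

lemma summable_jap {r : ℝ} (hr : 1 < r) : Summable (fun n : ℤ => jap n ^ (-r)) := by
  have hnat : Summable (fun n : ℕ => jap (n:ℤ) ^ (-r)) := by
    refine Summable.of_nonneg_of_le (fun n => jap_rpow_nonneg _ _) (fun n => ?_)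
      ((summable_nat_shift hr).mul_left ((Real.sqrt 2) ^ r))
    have hs2 : (0:ℝ) < Real.sqrt 2 := Real.sqrt_pos.2 (by norm_num)
    have hb : ((n:ℝ)+1) / Real.sqrt 2 ≤ jap (n:ℤ) := by
      rw [jap, Real.le_sqrt (by positivity) (by positivity), div_pow,
        Real.sq_sqrt (by norm_num : (0:ℝ) ≤ 2)]
      push_cast
      rw [div_le_iff₀ (by norm_num : (0:ℝ) < 2)]
      nlinarith [sq_nonneg ((n:ℝ) - 1)]
    have h2 : jap (n:ℤ) ^ (-r) ≤ (((n:ℝ)+1)/Real.sqrt 2) ^ (-r) :=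
      Real.rpow_le_rpow_of_nonpos (by positivity) hb (by linarith)
    have h3 : (((n:ℝ)+1)/Real.sqrt 2) ^ (-r) = (Real.sqrt 2) ^ r * ((n:ℝ)+1) ^ (-r) := by
      rw [Real.div_rpow (by positivity) hs2.le, Real.rpow_neg hs2.le, div_eq_mul_inv, inv_inv, mul_comm]
    exact h2.trans_eq h3
  exact Summable.of_nat_of_neg hnat (by simpa [jap_neg] using hnat)

lemma jap_half {m k : ℤ} (h : |m| ≤ 2 * |k|) : jap m ≤ 2 * jap k := by
  have hr : ((|m|:ℤ):ℝ) ≤ 2 * ((|k|:ℤ):ℝ) := by exact_mod_cast h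
  rw [Int.cast_abs, Int.cast_abs] at hr
  have hsq : (m:ℝ)^2 ≤ 4 * (k:ℝ)^2 := by
    nlinarith [abs_nonneg ((m:ℝ)), abs_nonneg ((k:ℝ)), sq_abs ((m:ℝ)), sq_abs ((k:ℝ))]
  have h1 : jap m ≤ Real.sqrt (4 * (1 + (k:ℝ)^2)) := by
    rw [jap]
    exact Real.sqrt_le_sqrt (by nlinarith)
  rwa [Real.sqrt_mul (by norm_num : (0:ℝ) ≤ 4),
    show Real.sqrt 4 = 2 by
      rw [show (4:ℝ) = 2^2 by norm_num, Real.sqrt_sq (by norm_num : (0:ℝ) ≤ 2)]] at h1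

lemma jap_rpow_half {m k : ℤ} (h : jap m ≤ 2 * jap k) {e : ℝ} (he : 0 ≤ e) :
    jap k ^ (-e) ≤ 2 ^ e * jap m ^ (-e) := by
  have hm2 : (0:ℝ) < jap m / 2 := by have := jap_pos m; linarith
  have h1 : jap m / 2 ≤ jap k := by linarith
  have h2 : jap k ^ (-e) ≤ (jap m / 2) ^ (-e) :=
    Real.rpow_le_rpow_of_nonpos hm2 h1 (neg_nonpos.2 he)
  have h3 : (jap m / 2) ^ (-e) = 2 ^ e * jap m ^ (-e) := by
    rw [Real.div_rpow (jap_pos m).le (by norm_num : (0:ℝ) ≤ 2),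
      Real.rpow_neg (by norm_num : (0:ℝ) ≤ 2), div_eq_mul_inv, inv_inv, mul_comm]
  exact h2.trans_eq h3

lemma key (s : ℝ) (hs1 : 1/2 < s) (hs2 : s < 3/2) (m n : ℤ) :
    jap n ^ (-(2*s-1)) * jap (m-n) ^ (-(1:ℝ)) ≤
      2 ^ (s-1/2) * jap m ^ (-(s-1/2)) *
        (jap n ^ (-(s+1/2)) + jap (m-n) ^ (-(s+1/2))) := by
  have he : (0:ℝ) ≤ s - 1/2 := by linarith
  have hsumnn : (0:ℝ) ≤ jap n ^ (-(s+1/2)) + jap (m-n) ^ (-(s+1/2)) :=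
    add_nonneg (jap_rpow_nonneg _ _) (jap_rpow_nonneg _ _)
  rcases le_total |n| |m - n| with hc | hc
  · -- |m| ≤ 2|m-n|
    have habs : |m| ≤ 2 * |m - n| := by
      calc |m| = |(m - n) + n| := by ring_nf
        _ ≤ |m - n| + |n| := abs_add_le _ _
        _ ≤ 2 * |m - n| := by linarith
    have hhalf : jap (m-n) ^ (-(s-1/2)) ≤ 2 ^ (s-1/2) * jap m ^ (-(s-1/2)) :=
      jap_rpow_half (jap_half habs) he
    have hsplit : jap (m-n) ^ (-(1:ℝ)) =
        jap (m-n) ^ (-(3/2-s)) * jap (m-n) ^ (-(s-1/2)) := by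
      rw [← jap_rpow_add]; congr 1; ring
    have hmax : jap n ^ (-(2*s-1)) * jap (m-n) ^ (-(3/2-s)) ≤
        jap n ^ (-(s+1/2)) + jap (m-n) ^ (-(s+1/2)) := by
      have := max_trick n (m-n) (α := 2*s-1) (β := 3/2-s) (by linarith) (by linarith)
      rwa [show (2*s-1) + (3/2-s) = s + 1/2 by ring] at this
    calc jap n ^ (-(2*s-1)) * jap (m-n) ^ (-(1:ℝ))
        = (jap n ^ (-(2*s-1)) * jap (m-n) ^ (-(3/2-s))) * jap (m-n) ^ (-(s-1/2)) := by
          rw [hsplit]; ring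
      _ ≤ (jap n ^ (-(s+1/2)) + jap (m-n) ^ (-(s+1/2))) *
            (2 ^ (s-1/2) * jap m ^ (-(s-1/2))) :=
          mul_le_mul hmax hhalf (jap_rpow_nonneg _ _)  hsumnn
      _ = 2 ^ (s-1/2) * jap m ^ (-(s-1/2)) *
            (jap n ^ (-(s+1/2)) + jap (m-n) ^ (-(s+1/2))) := by ring
  · -- |m| ≤ 2|n|
    have habs : |m| ≤ 2 * |n| := by
      calc |m| = |(m - n) + n| := by ring_nf
        _ ≤ |m - n| + |n| := abs_add_le _ _
        _ ≤ 2 * |n| := by linarith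
    have hhalf : jap n ^ (-(s-1/2)) ≤ 2 ^ (s-1/2) * jap m ^ (-(s-1/2)) :=
      jap_rpow_half (jap_half habs) he
    have hsplit : jap n ^ (-(2*s-1)) =
        jap n ^ (-(s-1/2)) * jap n ^ (-(s-1/2)) := by
      rw [← jap_rpow_add]; congr 1; ring
    have hmax : jap n ^ (-(s-1/2)) * jap (m-n) ^ (-(1:ℝ)) ≤
        jap n ^ (-(s+1/2)) + jap (m-n) ^ (-(s+1/2)) := by
      have := max_trick n (m-n) (α := s-1/2) (β := (1:ℝ)) (by linarith) (by norm_num)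
      rwa [show (s-1/2) + (1:ℝ) = s + 1/2 by ring] at this
    calc jap n ^ (-(2*s-1)) * jap (m-n) ^ (-(1:ℝ))
        = (jap n ^ (-(s-1/2)) * jap (m-n) ^ (-(1:ℝ))) * jap n ^ (-(s-1/2)) := by
          rw [hsplit]; ring
      _ ≤ (jap n ^ (-(s+1/2)) + jap (m-n) ^ (-(s+1/2))) *
            (2 ^ (s-1/2) * jap m ^ (-(s-1/2))) :=
          mul_le_mul hmax hhalf (jap_rpow_nonneg _ _) hsumnn
      _ = 2 ^ (s-1/2) * jap m ^ (-(s-1/2)) *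
            (jap n ^ (-(s+1/2)) + jap (m-n) ^ (-(s+1/2))) := by ring

set_option maxHeartbeats 2000000 in
/-- Convolution estimates, case `1/2 < s < 3/2`. -/
theorem statement4 (s : ℝ) (hs1 : 1 / 2 < s) (hs2 : s < 3 / 2) :
    ∃ c > 0, ∀ (m : ℤ) (M : ℕ),
      (∑' n : ℤ, jap n ^ (-(2 * s - 1)) * jap (m - n) ^ (-(1 : ℝ))
          ≤ c * jap m ^ (-(s - 1 / 2))) ∧
      (∑' n : ℤ, (if (M : ℤ) ≤ |n| then
            jap n ^ (-(2 * s - 1)) * jap (m - n) ^ (-(1 : ℝ)) else 0)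
          ≤ c * jap m ^ (-(s - 1 / 2)) *
            ((if 2 * (M : ℝ) / 3 ≤ |(m : ℝ)| then (1 : ℝ) else 0)
              + jap (M : ℤ) ^ (-(s - 1 / 2)))) := by
  have he : (0:ℝ) < s - 1/2 := by linarith
  have hr : (1:ℝ) < s + 1/2 := by linarith
  have hq : (0:ℝ) < 2*s - 1 := by linarith
  have hpq : (2*s : ℝ) = (2*s-1) + 1 := by ring
  have hKs : Summable (fun n : ℤ => jap n ^ (-(s+1/2))) := summable_jap hr
  set K : ℝ := ∑' n : ℤ, jap n ^ (-(s+1/2)) with hK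
  have hK0 : 0 ≤ K := tsum_nonneg (fun n => jap_rpow_nonneg _ _)
  set C : ℝ := 2 * (2 ^ (2*s) / (2*s-1)) * 2 ^ ((2*s-1)/2) with hCdef
  have hC0 : (0:ℝ) < C := by
    have h1 : (0:ℝ) < (2:ℝ) ^ (2*s) := Real.rpow_pos_of_pos two_pos _
    have h2 : (0:ℝ) < (2:ℝ) ^ ((2*s-1)/2) := Real.rpow_pos_of_pos two_pos _
    positivity
  have h2e0 : (0:ℝ) ≤ (2:ℝ) ^ (s-1/2) := (Real.rpow_pos_of_pos two_pos _).le
  set c : ℝ := 2 ^ (s-1/2) * (K + K) + 3 * C + 1 with hc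
  have hc0 : 0 < c := by
    have := mul_nonneg h2e0 (by linarith : (0:ℝ) ≤ K + K)
    rw [hc]; linarith
  refine ⟨c, hc0, fun m M => ?_⟩
  -- part (a)
  have hshift_s : Summable (fun n : ℤ => jap (m - n) ^ (-(s+1/2))) := by
    have h := ((Equiv.subLeft m).summable_iff
      (f := fun n : ℤ => jap n ^ (-(s+1/2)))).2 hKs
    simpa [Function.comp_def] using h
  have hshift_t : ∑' n : ℤ, jap (m - n) ^ (-(s+1/2)) = K := by
    have h := (Equiv.subLeft m).tsum_eq (fun n : ℤ => jap n ^ (-(s+1/2)))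
    simp only [Equiv.subLeft_apply] at h
    exact h
  set T : ℤ → ℝ := fun n => jap n ^ (-(2*s-1)) * jap (m - n) ^ (-(1:ℝ)) with hT
  have hT0 : ∀ n, 0 ≤ T n := fun n => mul_nonneg (jap_rpow_nonneg _ _) (jap_rpow_nonneg _ _)
  set B : ℤ → ℝ := fun n => 2 ^ (s-1/2) * jap m ^ (-(s-1/2)) *
    (jap n ^ (-(s+1/2)) + jap (m - n) ^ (-(s+1/2))) with hB
  have hTB : ∀ n, T n ≤ B n := fun n => key s hs1 hs2 m n
  have hBs : Summable B := (hKs.add hshift_s).mul_left _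
  have hBt : ∑' n, B n = 2 ^ (s-1/2) * jap m ^ (-(s-1/2)) * (K + K) := by
    rw [hB, tsum_mul_left, Summable.tsum_add hKs hshift_s, hshift_t]
  have hTs : Summable T := Summable.of_nonneg_of_le hT0 hTB hBs
  have hmnn : (0:ℝ) ≤ jap m ^ (-(s-1/2)) := jap_rpow_nonneg _ _
  have part_a : ∑' n, T n ≤ c * jap m ^ (-(s-1/2)) := by
    calc ∑' n, T n ≤ ∑' n, B n := Summable.tsum_le_tsum hTB hTs hBs
      _ = (2 ^ (s-1/2) * (K + K)) * jap m ^ (-(s-1/2)) := by rw [hBt]; ring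
      _ ≤ c * jap m ^ (-(s-1/2)) := by
          refine mul_le_mul_of_nonneg_right ?_ hmnn
          rw [hc]; linarith
  refine ⟨part_a, ?_⟩
  -- part (b)
  have hMnn : (0:ℝ) ≤ jap (M:ℤ) ^ (-(s-1/2)) := jap_rpow_nonneg _ _
  set g : ℤ → ℝ := fun n => if (M:ℤ) ≤ |n| then T n else 0 with hg
  have hg0 : ∀ n, 0 ≤ g n := by
    intro n; rw [hg]; dsimp only; split
    · exact hT0 n
    · exact le_rfl
  have hgT : ∀ n, g n ≤ T n := by
    intro n; rw [hg]; dsimp only; split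
    · exact le_rfl
    · exact hT0 n
  have hgs : Summable g := Summable.of_nonneg_of_le hg0 hgT hTs
  by_cases hind : 2 * (M:ℝ) / 3 ≤ |(m:ℝ)|
  · rw [if_pos hind]
    have h1 : ∑' n, g n ≤ c * jap m ^ (-(s-1/2)) :=
      le_trans (Summable.tsum_le_tsum hgT hgs hTs) part_a
    have h2 : c * jap m ^ (-(s-1/2)) * 1 ≤
        c * jap m ^ (-(s-1/2)) * (1 + jap (M:ℤ) ^ (-(s-1/2))) := by
      refine mul_le_mul_of_nonneg_left (by linarith) (mul_nonneg hc0.le hmnn)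
    calc ∑' n, g n ≤ c * jap m ^ (-(s-1/2)) := h1
      _ = c * jap m ^ (-(s-1/2)) * 1 := by ring
      _ ≤ c * jap m ^ (-(s-1/2)) * (1 + jap (M:ℤ) ^ (-(s-1/2))) := h2
  · rw [if_neg hind]
    push_neg at hind
    have hM1 : 1 ≤ M := by
      rcases Nat.eq_zero_or_pos M with h0 | h1
      · exfalso; rw [h0] at hind; simp at hind; linarith [abs_nonneg ((m:ℝ))]
      · exact h1
    obtain ⟨htail_s, htail⟩ := int_tail_bound hq hpq M hM1
    -- pointwise bound g n ≤ 3 * tail term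
    have hpt : ∀ n : ℤ, g n ≤ 3 * (if (M:ℤ) ≤ |n| then jap n ^ (-(2*s)) else 0) := by
      intro n
      rw [hg]; dsimp only
      by_cases hn : (M:ℤ) ≤ |n|
      · rw [if_pos hn, if_pos hn]
        have hnr : (M:ℝ) ≤ |(n:ℝ)| := by
          have : ((M:ℤ):ℝ) ≤ ((|n|:ℤ):ℝ) := by exact_mod_cast hn
          rwa [Int.cast_abs, Int.cast_natCast] at this
        have hmr : |(m:ℝ)| < 2 * (M:ℝ) / 3 := hind
        have habs : |(n:ℝ)| / 3 ≤ |((m - n : ℤ):ℝ)| := by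
          push_cast
          have h1 : |(n:ℝ)| - |(m:ℝ)| ≤ |(n:ℝ) - (m:ℝ)| := abs_sub_abs_le_abs_sub _ _
          have h2 : |(n:ℝ) - (m:ℝ)| = |(m:ℝ) - (n:ℝ)| := abs_sub_comm _ _
          linarith
        have hjap : jap n / 3 ≤ jap (m - n) := by
          have hsq : (1 + (n:ℝ)^2) / 9 ≤ 1 + ((m - n : ℤ):ℝ)^2 := by
            have h2 := sq_abs (((m - n : ℤ):ℝ))
            have h3 := sq_abs ((n:ℝ))
            nlinarith [abs_nonneg ((n:ℝ)), abs_nonneg (((m - n : ℤ):ℝ))]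
          have h4 := Real.sqrt_le_sqrt hsq
          have h5 : Real.sqrt ((1 + (n:ℝ)^2) / 9) = jap n / 3 := by
            rw [jap, Real.sqrt_div (by positivity) 9,
              show Real.sqrt 9 = 3 by
                rw [show (9:ℝ) = 3^2 by norm_num, Real.sqrt_sq (by norm_num : (0:ℝ) ≤ 3)]]
          rw [jap]
          rw [h5] at h4
          exact h4
        have hinv : jap (m - n) ^ (-(1:ℝ)) ≤ 3 * jap n ^ (-(1:ℝ)) := by
          rw [Real.rpow_neg_one, Real.rpow_neg_one]
          have hpos : (0:ℝ) < jap n / 3 := by linarith [jap_pos n]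
          calc (jap (m - n))⁻¹ ≤ (jap n / 3)⁻¹ := inv_anti₀ hpos hjap
            _ = 3 * (jap n)⁻¹ := by rw [inv_div]; ring
        calc jap n ^ (-(2*s-1)) * jap (m - n) ^ (-(1:ℝ))
            ≤ jap n ^ (-(2*s-1)) * (3 * jap n ^ (-(1:ℝ))) :=
              mul_le_mul_of_nonneg_left hinv (jap_rpow_nonneg _ _)
          _ = 3 * (jap n ^ (-(2*s-1)) * jap n ^ (-(1:ℝ))) := by ring
          _ = 3 * jap n ^ (-(2*s)) := by
              rw [show (-(2*s)) = -(2*s-1) + -(1:ℝ) by ring, jap_rpow_add]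
      · rw [if_neg hn, if_neg hn]; norm_num
    have hsum3 : Summable (fun n : ℤ => 3 * (if (M:ℤ) ≤ |n| then jap n ^ (-(2*s)) else 0)) :=
      htail_s.mul_left 3
    have hjmM : jap m ≤ jap (M:ℤ) := by
      refine jap_le_jap ?_
      have hM0 : (0:ℝ) ≤ (M:ℝ) := Nat.cast_nonneg M
      have h2 := sq_abs ((m:ℝ))
      push_cast
      nlinarith [abs_nonneg ((m:ℝ))]
    have hMe : jap (M:ℤ) ^ (-(s-1/2)) ≤ jap m ^ (-(s-1/2)) := jap_rpow_le hjmM he.le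
    have h3C : (0:ℝ) ≤ 3 * C := by linarith
    have h35 : 3 * C ≤ c := by
      rw [hc]
      nlinarith [mul_nonneg h2e0 (by linarith : (0:ℝ) ≤ K + K)]
    calc ∑' n, g n ≤ ∑' n : ℤ, 3 * (if (M:ℤ) ≤ |n| then jap n ^ (-(2*s)) else 0) :=
          Summable.tsum_le_tsum hpt hgs hsum3
      _ = 3 * ∑' n : ℤ, (if (M:ℤ) ≤ |n| then jap n ^ (-(2*s)) else 0) := tsum_mul_left
      _ ≤ 3 * (C * jap (M:ℤ) ^ (-(2*s-1))) := by
          have h0 : ∑' n : ℤ, (if (M:ℤ) ≤ |n| then jap n ^ (-(2*s)) else 0) ≤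
              C * jap (M:ℤ) ^ (-(2*s-1)) := htail
          linarith
      _ = 3 * C * (jap (M:ℤ) ^ (-(s-1/2)) * jap (M:ℤ) ^ (-(s-1/2))) := by
          rw [← jap_rpow_add, show -(s-1/2) + -(s-1/2) = -(2*s-1) by ring]; ring
      _ ≤ 3 * C * (jap m ^ (-(s-1/2)) * jap (M:ℤ) ^ (-(s-1/2))) := by
          refine mul_le_mul_of_nonneg_left ?_ h3C
          exact mul_le_mul_of_nonneg_right hMe hMnn
      _ ≤ c * jap m ^ (-(s-1/2)) * (0 + jap (M:ℤ) ^ (-(s-1/2))) := by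
          rw [zero_add]
          calc 3 * C * (jap m ^ (-(s-1/2)) * jap (M:ℤ) ^ (-(s-1/2)))
              ≤ c * (jap m ^ (-(s-1/2)) * jap (M:ℤ) ^ (-(s-1/2))) :=
                mul_le_mul_of_nonneg_right h35 (mul_nonneg hmnn hMnn)
            _ = c * jap m ^ (-(s-1/2)) * jap (M:ℤ) ^ (-(s-1/2)) := by ring
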